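/- Suppose ℙ⁻(S_φ) = 1, where S_φ is the set of weakly hyperbolic sequences, and let ρ : Σ_k → M be any measurable map satisfying f_{ω_0}(ρ(σω)) = ρ(ω) for ℙ⁻-almost every ω, where ℙ⁻ is a shift-invariant measure. Then ρ(ω) = π(ω) for ℙ⁻-almost every ω, where π is the coding map. In other words, the invariant map is ℙ⁻-a.e. unique. -/
import Mathlib


open Set MeasureTheory Filter Topology

/-- `comps f ω n = f (ω 0) ∘ f (ω 1) ∘ ⋯ ∘ f (ω n)`. -/
def comps {M : Type*} {k : ℕ} (f : Fin k → M → M) (ξ : ℕ → Fin k) : ℕ → M → M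
  | 0 => f (ξ 0)
  | n + 1 => comps f ξ n ∘ f (ξ (n + 1))

/-- The shift map on `Σ_k`. -/
def shift {k : ℕ} (ω : ℕ → Fin k) : ℕ → Fin k := fun n => ω (n + 1)

lemma shift_iterate_apply {k : ℕ} (ω : ℕ → Fin k) : ∀ n m, (shift^[n] ω) m = ω (m + n) := by
  intro n
  induction n with
  | zero => simp
  | succ n ih =>
    intro m
    rw [Function.iterate_succ_apply']
    show (shift^[n] ω) (m + 1) = ω (m + (n + 1))
    rw [ih]
    ring_nf

/-- If `ℙ⁻`-almost every sequence is weakly hyperbolic (with coding map `π`),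
then any measurable invariant map `ρ` coincides `ℙ⁻`-a.e. with `π`: the
invariant map is a.e. unique. -/
theorem stmt11 {M : Type*} [MetricSpace M] [CompactSpace M]
    [MeasurableSpace M] [BorelSpace M]
    {k : ℕ} (f : Fin k → M → M) (hf : ∀ i, Continuous (f i))
    (μ : Measure (ℕ → Fin k)) [IsProbabilityMeasure μ]
    (hinvμ : μ.map shift = μ)
    (π : (ℕ → Fin k) → M)
    (hSφ : ∀ᵐ ω ∂μ, (⋂ n, comps f ω n '' Set.univ) = {π ω})
    (ρ : (ℕ → Fin k) → M) (hρmeas : Measurable ρ)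
    (hinv : ∀ᵐ ω ∂μ, f (ω 0) (ρ (shift ω)) = ρ ω) :
    ∀ᵐ ω ∂μ, ρ ω = π ω := by
  have hshift : Measurable (shift (k := k)) :=
    measurable_pi_lambda _ (fun n => measurable_pi_apply (n + 1))
  have hmap : ∀ n : ℕ, μ.map (shift^[n]) = μ := by
    intro n
    induction n with
    | zero => simp
    | succ n ih =>
      rw [Function.iterate_succ', ← Measure.map_map hshift (hshift.iterate n), ih, hinvμ]
  have key : ∀ n : ℕ, ∀ᵐ ω ∂μ,
      f ((shift^[n] ω) 0) (ρ (shift (shift^[n] ω))) = ρ (shift^[n] ω) := by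
    intro n
    refine ae_of_ae_map (p := fun ω => f (ω 0) (ρ (shift ω)) = ρ ω)
      (hshift.iterate n).aemeasurable ?_
    rw [hmap n]
    exact hinv
  have hall : ∀ᵐ ω ∂μ, ∀ n,
      f ((shift^[n] ω) 0) (ρ (shift (shift^[n] ω))) = ρ (shift^[n] ω) :=
    ae_all_iff.mpr key
  filter_upwards [hall, hSφ] with ω hω hπ
  have hiter : ∀ n, ρ ω = comps f ω n (ρ (shift^[n + 1] ω)) := by
    intro n
    induction n with
    | zero =>
      have h := hω 0
      simp only [Function.iterate_zero_apply] at h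
      rw [← Function.iterate_one (shift (k := k))] at h ⊢
      simpa [comps] using h.symm
    | succ n ih =>
      have h := hω (n + 1)
      rw [shift_iterate_apply ω (n + 1) 0, ← Function.iterate_succ_apply' shift (n + 1) ω] at h
      rw [ih, ← h]
      simp [comps]
  have hmem : ρ ω ∈ ⋂ n, comps f ω n '' Set.univ := by
    refine mem_iInter.mpr fun n => ⟨ρ (shift^[n + 1] ω), mem_univ _, (hiter n).symm⟩
  rw [hπ] at hmem
  exact hmem
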